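/- arXiv:1204.1159 — 2 statements merged into one kernel-verified Lean document; each statement's English description precedes it below -/
import Mathlib

section
/- There exist constants C, c > 0 such that for every n ∈ ℕ and every u ∈ ℝ with u² ≥ 2(2n + 1): h_n(u)² ≤ C e^{−c u²}. -/
/-!
Setting: `X = ℝ^{d₁} × ℝ^{d₂}` with Lebesgue measure (modelled as
`(Fin d₁ → ℝ) × (Fin d₂ → ℝ)` with `volume`), and the Grushin operator
`L = −Δ_{x′} − |x′|² Δ_{x″}`.
-/

open MeasureTheory Real Set
open scoped ENNReal NNReal

noncomputable section

/-- The `ℓ`-th Hermite function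
`h_ℓ(t) = (−1)^ℓ (ℓ! 2^ℓ √π)^{−1/2} e^{t²/2} (d/dt)^ℓ e^{−t²}`. -/
def hermiteFun (ℓ : ℕ) (t : ℝ) : ℝ :=
  (-1 : ℝ) ^ ℓ * (Real.sqrt (ℓ.factorial * 2 ^ ℓ * Real.sqrt Real.pi))⁻¹ *
    Real.exp (t ^ 2 / 2) * iteratedDeriv ℓ (fun s => Real.exp (-s ^ 2)) t

/-!
With `x = √2 u` one has `h_n(u)² = He_n(x)² e^{-u²} / (n! √π)`, where
`He_n = Polynomial.hermite` is the probabilists' Hermite polynomial. Past the turning point,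
`x ≥ 0` and `x² ≥ 4n`, the recurrence `He_{k+2} = x He_{k+1} - (k+1) He_k` keeps
`He_{k+1}(x) / He_k(x)` in `[x/2, x]`, so `|He_n(x)| ≤ |x|^n` and
`h_n(u)² ≤ (2u²)^n e^{-u²} / n!`. Finally
`(2u²)^n / n! = 4^n (u²/2)^n / n! ≤ e^{3n/2} e^{u²/2} ≤ e^{7u²/8}` because `n ≤ u²/4`.
-/

namespace Polynomial

theorem derivative_hermite_succ (n : ℕ) :
    derivative (hermite (n + 1)) = (n + 1 : ℤ[X]) * hermite n := by
  induction n with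
  | zero => simp
  | succ n ih =>
    rw [hermite_succ (n + 1), derivative_sub, derivative_mul, derivative_X, ih, derivative_mul,
      hermite_succ n]
    simp only [derivative_add, derivative_natCast, derivative_one, add_zero, zero_mul]
    push_cast
    ring

theorem hermite_succ_succ (n : ℕ) :
    hermite (n + 2) = X * hermite (n + 1) - (n + 1 : ℤ[X]) * hermite n := by
  rw [hermite_succ (n + 1), derivative_hermite_succ]

theorem aeval_hermite_succ_succ {R : Type*} [CommRing R] (n : ℕ) (x : R) :
    aeval x (hermite (n + 2)) = x * aeval x (hermite (n + 1)) - (n + 1) * aeval x (hermite n) := by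
  rw [hermite_succ_succ]
  simp

theorem aeval_neg_hermite {R : Type*} [CommRing R] (n : ℕ) (x : R) :
    aeval (-x) (hermite n) = (-1) ^ n * aeval x (hermite n) := by
  induction n using Nat.twoStepInduction with
  | zero => simp
  | one => simp
  | more n ih₀ ih₁ =>
    rw [aeval_hermite_succ_succ, aeval_hermite_succ_succ, ih₀, ih₁]
    ring

theorem aeval_hermite_nonneg_and_succ_mem_Icc {x : ℝ} (hx : 0 ≤ x) {k : ℕ}
    (hk : 4 * (k + 1 : ℝ) ≤ x ^ 2) :
    0 ≤ aeval x (hermite k) ∧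
      aeval x (hermite (k + 1)) ∈
        Icc (x / 2 * aeval x (hermite k)) (x * aeval x (hermite k)) := by
  induction k with
  | zero => simp [hx]
  | succ k ih =>
    obtain ⟨hA, hlow, hup⟩ := ih (by push_cast at hk ⊢; linarith)
    have hB : 0 ≤ aeval x (hermite (k + 1)) := le_trans (by positivity) hlow
    refine ⟨hB, ?_, ?_⟩ <;> rw [aeval_hermite_succ_succ]
    · push_cast at hk
      nlinarith [mul_le_mul_of_nonneg_left hlow hx]
    · nlinarith

theorem abs_aeval_hermite_le {n : ℕ} {x : ℝ} (hx : 4 * (n : ℝ) ≤ x ^ 2) :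
    |aeval x (hermite n)| ≤ |x| ^ n := by
  wlog hx₀ : 0 ≤ x generalizing x
  · simpa [aeval_neg_hermite, abs_mul] using this (x := -x) (by simpa using hx) (by linarith)
  rw [abs_of_nonneg hx₀]
  induction n with
  | zero => simp
  | succ n ih =>
    obtain ⟨hA, hlow, hup⟩ := aeval_hermite_nonneg_and_succ_mem_Icc hx₀ (by exact_mod_cast hx)
    have hB : 0 ≤ aeval x (hermite (n + 1)) := le_trans (by positivity) hlow
    rw [abs_of_nonneg hA] at ih
    rw [abs_of_nonneg hB, pow_succ']
    exact hup.trans (mul_le_mul_of_nonneg_left (ih (by push_cast at hx; linarith)) hx₀)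

end Polynomial

open Polynomial
open scoped Nat

theorem iteratedDeriv_exp_neg_sq (n : ℕ) (t : ℝ) :
    iteratedDeriv n (fun s => exp (-s ^ 2)) t =
      (-√2) ^ n * aeval (√2 * t) (hermite n) * exp (-t ^ 2) := by
  have hscale : (fun s : ℝ => exp (-s ^ 2)) = fun s => exp (-((√2 * s) ^ 2 / 2)) := by
    ext s
    rw [mul_pow, sq_sqrt zero_le_two]
    ring_nf
  have hsmooth : ContDiff ℝ n fun y : ℝ => exp (-(y ^ 2 / 2)) := by fun_prop
  rw [hscale, iteratedDeriv_comp_const_mul hsmooth, iteratedDeriv_eq_iterate]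
  beta_reduce
  rw [deriv_gaussian_eq_hermite_mul_gaussian, mul_pow, sq_sqrt zero_le_two, neg_pow √2]
  ring_nf

theorem hermiteFun_sq (n : ℕ) (u : ℝ) :
    hermiteFun n u ^ 2 = aeval (√2 * u) (hermite n) ^ 2 * exp (-u ^ 2) / (n ! * √π) := by
  have hexp : (exp (u ^ 2 / 2) * exp (-u ^ 2)) ^ 2 = exp (-u ^ 2) := by
    rw [← exp_add, ← exp_nat_mul]
    ring_nf
  have hnorm : (√(n ! * 2 ^ n * √π))⁻¹ ^ 2 * (√2 ^ n) ^ 2 = (n ! * √π)⁻¹ := by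
    rw [inv_pow, sq_sqrt (by positivity), ← pow_mul, mul_comm n 2, pow_mul, sq_sqrt zero_le_two]
    field_simp
  rw [hermiteFun, iteratedDeriv_exp_neg_sq, neg_pow √2]
  calc _ = ((-1) ^ n) ^ 4 * ((√(n ! * 2 ^ n * √π))⁻¹ ^ 2 * (√2 ^ n) ^ 2) *
        aeval (√2 * u) (hermite n) ^ 2 * (exp (u ^ 2 / 2) * exp (-u ^ 2)) ^ 2 := by ring
    _ = _ := by rw [hnorm, hexp, ← pow_mul, Even.neg_one_pow ⟨2 * n, by ring⟩]; ring

theorem two_mul_pow_div_factorial_le_exp {n : ℕ} {y : ℝ} (hy : 4 * n ≤ y) :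
    (2 * y) ^ n / n ! ≤ exp (7 * y / 8) := by
  have hfour : (4 : ℝ) ≤ exp (3 / 2) := by
    rw [← exp_log (by norm_num : (0 : ℝ) < 4), exp_le_exp,
      show (4 : ℝ) = 2 ^ 2 by norm_num, log_pow]
    linarith [log_two_lt_d9]
  have hy₀ : 0 ≤ y / 2 := by linarith [(n.cast_nonneg : (0 : ℝ) ≤ n)]
  calc (2 * y) ^ n / n ! = 4 ^ n * ((y / 2) ^ n / n !) := by
        rw [← mul_div_assoc, ← mul_pow]
        ring_nf
    _ ≤ exp (3 / 2) ^ n * exp (y / 2) :=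
      mul_le_mul (pow_le_pow_left₀ (by norm_num) hfour n) (pow_div_factorial_le_exp _ hy₀ n)
        (by positivity) (by positivity)
    _ = exp (3 / 2 * n + y / 2) := by rw [← exp_nat_mul, ← exp_add]; ring_nf
    _ ≤ exp (7 * y / 8) := exp_le_exp.2 (by linarith)

/-- There are `C, c > 0` such that `h_n(u)² ≤ C e^{−c u²}` whenever
`u² ≥ 2(2n + 1)`. -/
theorem hermite_sq_gaussian_decay :
    ∃ C : ℝ, 0 < C ∧ ∃ c : ℝ, 0 < c ∧ ∀ (n : ℕ) (u : ℝ),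
      2 * ((2 * n + 1 : ℕ) : ℝ) ≤ u ^ 2 →
        hermiteFun n u ^ 2 ≤ C * Real.exp (-c * u ^ 2) := by
  refine ⟨1, one_pos, 1 / 8, by norm_num, fun n u hu => ?_⟩
  have hn : 4 * (n : ℝ) ≤ u ^ 2 := by push_cast at hu; linarith
  have hx : (√2 * u) ^ 2 = 2 * u ^ 2 := by rw [mul_pow, sq_sqrt zero_le_two]
  have hHe : aeval (√2 * u) (hermite n) ^ 2 ≤ (2 * u ^ 2) ^ n := by
    calc _ = |aeval (√2 * u) (hermite n)| ^ 2 := (sq_abs _).symm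
      _ ≤ (|√2 * u| ^ n) ^ 2 := by
        gcongr
        exact abs_aeval_hermite_le (by linarith)
      _ = (2 * u ^ 2) ^ n := by rw [← pow_mul, mul_comm n 2, pow_mul, sq_abs, hx]
  have hpi : (1 : ℝ) ≤ √π := one_le_sqrt.2 (by linarith [pi_gt_three])
  rw [hermiteFun_sq, one_mul]
  calc _ ≤ aeval (√2 * u) (hermite n) ^ 2 * exp (-u ^ 2) / n ! := by
        gcongr
        exact le_mul_of_one_le_right (by positivity) hpi
    _ ≤ (2 * u ^ 2) ^ n / n ! * exp (-u ^ 2) := by rw [div_mul_eq_mul_div]; gcongr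
    _ ≤ exp (7 * u ^ 2 / 8) * exp (-u ^ 2) := by
        gcongr
        exact two_mul_pow_div_factorial_le_exp hn
    _ = exp (-(1 / 8) * u ^ 2) := by rw [← exp_add]; ring_nf

end
end

section
/- There exists a constant C > 0 such that for all R > 0 and all x, y ∈ X: min{R, |y′|^{−1}} |x′| ≤ C (1 + R ϱ(x, y)); that is, w_R(x, y) ≤ C (1 + R ϱ(x, y)). -/
/-!
Setting: `X = ℝ^{d₁} × ℝ^{d₂}` with Lebesgue measure (modelled as
`(Fin d₁ → ℝ) × (Fin d₂ → ℝ)` with `volume`), and the Grushin operator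
`L = −Δ_{x′} − |x′|² Δ_{x″}`.
-/

open MeasureTheory Real Set
open scoped ENNReal NNReal

noncomputable section

/-- The Euclidean norm of a vector in `Fin d → ℝ`. -/
def eNorm {d : ℕ} (u : Fin d → ℝ) : ℝ := Real.sqrt (∑ j, u j ^ 2)

/-- The explicit quasi-distance
`ϱ(x,y) = |x′−y′| + min{ |x″−y″|/(|x′|+|y′|), |x″−y″|^{1/2} }`
(the quotient read as `+∞`, i.e. the min as the square root, when `x′ = y′ = 0`),
comparable with the control distance of the Grushin operator. -/
def grushinDist {d₁ d₂ : ℕ} (x y : (Fin d₁ → ℝ) × (Fin d₂ → ℝ)) : ℝ :=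
  eNorm (x.1 - y.1) +
    (if eNorm x.1 + eNorm y.1 = 0 then Real.sqrt (eNorm (x.2 - y.2))
     else min (eNorm (x.2 - y.2) / (eNorm x.1 + eNorm y.1)) (Real.sqrt (eNorm (x.2 - y.2))))

/-- The weight `w_R(x,y) = min{R, |y′|⁻¹} |x′|` (read as `R|x′|` when `y′ = 0`). -/
def grushinWeight {d₁ d₂ : ℕ} (R : ℝ) (x y : (Fin d₁ → ℝ) × (Fin d₂ → ℝ)) : ℝ :=
  (if eNorm y.1 = 0 then R else min R (eNorm y.1)⁻¹) * eNorm x.1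


lemma eNorm_nonneg {d : ℕ} (u : Fin d → ℝ) : 0 ≤ eNorm u := Real.sqrt_nonneg _

lemma eNorm_eq_norm {d : ℕ} (u : Fin d → ℝ) :
    eNorm u = ‖(WithLp.equiv 2 (Fin d → ℝ)).symm u‖ := by
  rw [eNorm, EuclideanSpace.norm_eq]
  simp [Real.norm_eq_abs, sq_abs]

lemma eNorm_triangle {d : ℕ} (u v : Fin d → ℝ) :
    eNorm u ≤ eNorm (u - v) + eNorm v := by
  simp only [eNorm_eq_norm]
  have : (WithLp.equiv 2 (Fin d → ℝ)).symm (u - v)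
      = (WithLp.equiv 2 (Fin d → ℝ)).symm u - (WithLp.equiv 2 (Fin d → ℝ)).symm v := rfl
  rw [this]
  calc ‖(WithLp.equiv 2 (Fin d → ℝ)).symm u‖
      = ‖((WithLp.equiv 2 (Fin d → ℝ)).symm u - (WithLp.equiv 2 (Fin d → ℝ)).symm v)
          + (WithLp.equiv 2 (Fin d → ℝ)).symm v‖ := by rw [sub_add_cancel]
    _ ≤ _ := norm_add_le _ _

/-- There is `C > 0` such that for all `R > 0` and all `x, y ∈ X`:
`w_R(x,y) = min{R, |y′|⁻¹}|x′| ≤ C (1 + R ϱ(x,y))`. -/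
theorem grushin_weight_le_distance
    (d₁ d₂ : ℕ) (hd₁ : 1 ≤ d₁) (hd₂ : 1 ≤ d₂) :
    ∃ C : ℝ, 0 < C ∧
      ∀ R : ℝ, 0 < R → ∀ x y : (Fin d₁ → ℝ) × (Fin d₂ → ℝ),
        grushinWeight R x y ≤ C * (1 + R * grushinDist x y) := by
  refine ⟨1, one_pos, fun R hR x y => ?_⟩
  have hsub : eNorm (x.1 - y.1) ≤ grushinDist x y := by
    unfold grushinDist
    have h2 : 0 ≤ (if eNorm x.1 + eNorm y.1 = 0 then Real.sqrt (eNorm (x.2 - y.2))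
        else min (eNorm (x.2 - y.2) / (eNorm x.1 + eNorm y.1)) (Real.sqrt (eNorm (x.2 - y.2)))) := by
      split_ifs with h
      · exact Real.sqrt_nonneg _
      · exact le_min (div_nonneg (eNorm_nonneg _) (add_nonneg (eNorm_nonneg _) (eNorm_nonneg _)))
          (Real.sqrt_nonneg _)
    linarith
  have htri := eNorm_triangle x.1 y.1
  unfold grushinWeight
  split_ifs with h
  · have hx : eNorm x.1 ≤ eNorm (x.1 - y.1) := by rw [h] at htri; linarith
    nlinarith [eNorm_nonneg x.1, mul_le_mul_of_nonneg_left hx hR.le,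
      mul_le_mul_of_nonneg_left hsub hR.le]
  · have hy : 0 < eNorm y.1 := lt_of_le_of_ne (eNorm_nonneg _) (Ne.symm h)
    have hm : 0 ≤ min R (eNorm y.1)⁻¹ := le_min hR.le (by positivity)
    have h1 : min R (eNorm y.1)⁻¹ * eNorm x.1
        ≤ min R (eNorm y.1)⁻¹ * (eNorm (x.1 - y.1) + eNorm y.1) :=
      mul_le_mul_of_nonneg_left htri hm
    have h2 : min R (eNorm y.1)⁻¹ * eNorm (x.1 - y.1) ≤ R * grushinDist x y := by
      have := mul_le_mul (min_le_left R (eNorm y.1)⁻¹) hsub (eNorm_nonneg _) hR.le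
      linarith
    have h3 : min R (eNorm y.1)⁻¹ * eNorm y.1 ≤ 1 := by
      calc min R (eNorm y.1)⁻¹ * eNorm y.1 ≤ (eNorm y.1)⁻¹ * eNorm y.1 :=
            mul_le_mul_of_nonneg_right (min_le_right _ _) hy.le
        _ = 1 := inv_mul_cancel₀ (ne_of_gt hy)
    nlinarith


end
end
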